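/- arXiv:2107.04302 — 5 statements merged into one kernel-verified Lean document; each statement's English description precedes it below -/
import Mathlib

section
/- Let V be a d-dimensional vector space over the field F₂ with two elements and let H be a (finite) subgroup of GL(V). Let x₁, …, x_k be a complete set of representatives of the conjugacy classes of elements of prime order in H. If 2^d > Σ_{i=1}^{k} |x_i^H| · 2^{dim C_V(x_i)}, where x_i^H denotes the conjugacy class of x_i in H, then H has a regular orbit on V, i.e., there exists v ∈ V whose stabiliser in H is the trivial subgroup. -/
/-!
If no vector has trivial stabiliser, every `v ∈ V` is fixed by a nontrivial element of `H`, hence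
by a suitable power of it of prime order, hence by a conjugate `y` of some representative `xᵢ`.
So `V` is covered by the fixed spaces `C_V(y)`, `y ∈ xᵢ^H`, and conjugate elements have fixed
spaces of equal size, so the union bound gives `2^d ≤ Σᵢ |xᵢ^H| · 2^{dim C_V(xᵢ)}`.
-/

open MulAction

theorem IsOfFinOrder.exists_orderOf_pow_prime {G : Type*} [Monoid G] {x : G}
    (hx : IsOfFinOrder x) (hx1 : x ≠ 1) : ∃ n, (orderOf (x ^ n)).Prime := by
  have hn1 : orderOf x ≠ 1 := by rwa [ne_eq, orderOf_eq_one_iff]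
  exact ⟨orderOf x / (orderOf x).minFac, by
    rw [orderOf_pow_orderOf_div hx.orderOf_pos.ne' (Nat.minFac_dvd _)]
    exact Nat.minFac_prime hn1⟩

theorem MulAction.natCard_fixedBy_eq_of_isConj {G α : Type*} [Group G] [MulAction G α]
    {g h : G} (hgh : IsConj g h) : Nat.card (fixedBy α h) = Nat.card (fixedBy α g) := by
  obtain ⟨c, rfl⟩ := isConj_iff.mp hgh
  rw [← smul_fixedBy, Set.natCard_smul_set]

theorem MulAction.natCard_sigma_fixedBy_isConj {G α : Type*} [Group G] [MulAction G α]
    [Finite G] [Finite α] (r : G) :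
    Nat.card (Σ g : { g : G // IsConj r g }, fixedBy α (g : G)) =
      Nat.card { g : G // IsConj r g } * Nat.card (fixedBy α r) := by
  have := Fintype.ofFinite { g : G // IsConj r g }
  rw [Nat.card_sigma, Nat.card_eq_fintype_card, ← smul_eq_mul, ← Finset.card_univ,
    ← Finset.sum_const]
  exact Finset.sum_congr rfl fun g _ => natCard_fixedBy_eq_of_isConj g.2

theorem MulAction.natCard_le_sum_of_stabilizer_ne_bot {G α : Type*} [Group G] [MulAction G α]
    [Finite G] [Finite α]
    (R : Finset G) (hrep : ∀ g : G, (orderOf g).Prime → ∃ r ∈ R, IsConj r g)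
    (hstab : ∀ a : α, stabilizer G a ≠ ⊥) :
    Nat.card α ≤ ∑ r ∈ R, Nat.card { g : G // IsConj r g } * Nat.card (fixedBy α r) := by
  have hcover : ∀ a : α, ∃ r : R, ∃ g : { g : G // IsConj (r : G) g }, a ∈ fixedBy α (g : G) := by
    intro a
    obtain ⟨x, hx1⟩ := (Subgroup.ne_bot_iff_exists_ne_one).mp (hstab a)
    obtain ⟨n, hn⟩ := (isOfFinOrder_of_finite (x : G)).exists_orderOf_pow_prime
      (by simpa using hx1)
    obtain ⟨r, hr, hrg⟩ := hrep _ hn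
    exact ⟨⟨r, hr⟩, ⟨_, hrg⟩, (stabilizer G a).pow_mem x.2 n⟩
  choose r g hg using hcover
  calc Nat.card α
      ≤ Nat.card (Σ r : R, Σ g : { g : G // IsConj (r : G) g }, fixedBy α (g : G)) :=
        Nat.card_le_card_of_injective (fun a => ⟨r a, g a, a, hg a⟩)
          fun a b hab => congrArg (fun t => (t.2.2 : α)) hab
    _ = ∑ r ∈ R, Nat.card { g : G // IsConj r g } * Nat.card (fixedBy α r) := by
        simp_rw [Nat.card_sigma, natCard_sigma_fixedBy_isConj]
        exact R.sum_attach fun r => Nat.card { g : G // IsConj r g } * Nat.card (fixedBy α r)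

namespace LinearMap.GeneralLinearGroup

theorem fixedBy_eq_ker_sub_id {R M : Type*} [Ring R] [AddCommGroup M] [Module R M]
    {H : Subgroup (GeneralLinearGroup R M)} (x : H) :
    fixedBy M x = ker (((x : GeneralLinearGroup R M) : M →ₗ[R] M) - id) := by
  ext v
  simp only [mem_fixedBy, SetLike.mem_coe, mem_ker, sub_apply, id_coe, id_eq, sub_eq_zero]
  exact Iff.rfl

theorem natCard_fixedBy {K V : Type*} [Field K] [AddCommGroup V] [Module K V]
    [FiniteDimensional K V] {H : Subgroup (GeneralLinearGroup K V)} (x : H) :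
    Nat.card (fixedBy V x) =
      Nat.card K ^ Module.finrank K (ker (((x : GeneralLinearGroup K V) : V →ₗ[K] V) - id)) := by
  rw [fixedBy_eq_ker_sub_id, SetLike.coe_sort_coe, Module.natCard_eq_pow_finrank (K := K)]

end LinearMap.GeneralLinearGroup

theorem stmt1_general {V : Type*} [AddCommGroup V] [Module (ZMod 2) V]
    [FiniteDimensional (ZMod 2) V] {d : ℕ} (hd : Module.finrank (ZMod 2) V = d)
    (H : Subgroup (LinearMap.GeneralLinearGroup (ZMod 2) V))
    (R : Finset H)
    (hrep : ∀ y : H, (orderOf y).Prime → ∃ x ∈ R, IsConj x y)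
    (hineq : 2 ^ d > ∑ x ∈ R, Nat.card { y : H // IsConj x y } *
      2 ^ (Module.finrank (ZMod 2)
        (LinearMap.ker (((x : LinearMap.GeneralLinearGroup (ZMod 2) V) : V →ₗ[ZMod 2] V)
          - LinearMap.id)))) :
    ∃ v : V, MulAction.stabilizer H v = ⊥ := by
  have : Finite V := Module.finite_of_finite (ZMod 2)
  have : Finite (Module.End (ZMod 2) V) := Module.finite_of_finite (ZMod 2)
  by_contra! hstab
  have hcover := natCard_le_sum_of_stabilizer_ne_bot R hrep hstab
  rw [Module.natCard_eq_pow_finrank (K := ZMod 2), Nat.card_zmod, hd] at hcover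
  simp_rw [LinearMap.GeneralLinearGroup.natCard_fixedBy, Nat.card_zmod] at hcover
  exact hcover.not_gt hineq

/-- If `V` is a `d`-dimensional vector space over `𝔽₂`, `H ≤ GL(V)` and `x₁, …, x_k` is a
complete set of representatives of the conjugacy classes of elements of prime order in `H`,
then `H` has a regular orbit on `V` provided
`2^d > Σᵢ |xᵢ^H| · 2^{dim C_V(xᵢ)}`. -/
theorem stmt1 {V : Type*} [AddCommGroup V] [Module (ZMod 2) V]
    [FiniteDimensional (ZMod 2) V] {d : ℕ} (hd : Module.finrank (ZMod 2) V = d)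
    (H : Subgroup (LinearMap.GeneralLinearGroup (ZMod 2) V))
    (R : Finset H)
    (hprime : ∀ x ∈ R, (orderOf x).Prime)
    (hrep : ∀ y : H, (orderOf y).Prime → ∃ x ∈ R, IsConj x y)
    (hdist : ∀ x ∈ R, ∀ y ∈ R, IsConj x y → x = y)
    (hineq : 2 ^ d > ∑ x ∈ R, Nat.card { y : H // IsConj x y } *
      2 ^ (Module.finrank (ZMod 2)
        (LinearMap.ker (((x : LinearMap.GeneralLinearGroup (ZMod 2) V) : V →ₗ[ZMod 2] V)
          - LinearMap.id)))) :
    ∃ v : V, MulAction.stabilizer H v = ⊥ :=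
  stmt1_general hd H R hrep hineq
end

section
/- Let F be a field, let V be a finite-dimensional F-vector space, and let G be a nontrivial subgroup of GL(V) acting irreducibly on V (V has no G-invariant subspace other than 0 and V). Let x ∈ GL(V) and let S be a nonempty finite subset of the G-conjugacy class {g x g⁻¹ : g ∈ G} of x such that the subgroup of GL(V) generated by S contains G. Then dim C_V(x) ≤ (1 − 1/|S|) · dim V. -/
/-- Let `G ≤ GL(V)` be a nontrivial irreducible subgroup, let `x ∈ GL(V)` and let `S` be a
nonempty finite subset of the `G`-conjugacy class of `x` such that `⟨S⟩ ⊇ G`. Then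
`dim C_V(x) ≤ (1 − 1/|S|) · dim V`. -/
theorem stmt3 {F V : Type*} [Field F] [AddCommGroup V] [Module F V]
    [FiniteDimensional F V] (G : Subgroup (LinearMap.GeneralLinearGroup F V))
    (hG : G ≠ ⊥)
    (hirr : ∀ W : Submodule F V, (∀ g ∈ G, ∀ v ∈ W,
      ((g : LinearMap.GeneralLinearGroup F V) : V →ₗ[F] V) v ∈ W) → W = ⊥ ∨ W = ⊤)
    (x : LinearMap.GeneralLinearGroup F V)
    (S : Finset (LinearMap.GeneralLinearGroup F V)) (hS : S.Nonempty)
    (hconj : ∀ s ∈ S, ∃ g ∈ G, g * x * g⁻¹ = s)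
    (hgen : G ≤ Subgroup.closure (S : Set (LinearMap.GeneralLinearGroup F V))) :
    (Module.finrank F (LinearMap.ker ((x : V →ₗ[F] V) - LinearMap.id)) : ℝ) ≤
      (1 - 1 / (S.card : ℝ)) * Module.finrank F V := by
  classical
  set f : LinearMap.GeneralLinearGroup F V → Submodule F V :=
    fun s => LinearMap.ker ((s : V →ₗ[F] V) - LinearMap.id) with hf
  set n := Module.finrank F V with hn
  set k := Module.finrank F (f x) with hk
  have hmem : ∀ (s : LinearMap.GeneralLinearGroup F V) (v : V),
      v ∈ f s ↔ (s : V →ₗ[F] V) v = v := by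
    intro s v
    simp [hf, LinearMap.mem_ker, sub_eq_zero]
  have hkn : k ≤ n := Submodule.finrank_le _
  -- all ranks equal
  have hrank : ∀ s ∈ S, Module.finrank F (f s) = k := by
    intro s hs
    obtain ⟨g, hgG, hgx⟩ := hconj s hs
    have heq : f s = Submodule.map
        (↑(LinearMap.GeneralLinearGroup.toLinearEquiv g) : V →ₗ[F] V) (f x) := by
      ext v
      rw [Submodule.mem_map_equiv, hmem, hmem]
      have hsymm : ((LinearMap.GeneralLinearGroup.toLinearEquiv g).symm v) =
          ((g⁻¹ : LinearMap.GeneralLinearGroup F V) : V →ₗ[F] V) v := rfl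
      rw [hsymm]
      constructor
      · intro h
        have : ((g * x * g⁻¹ : LinearMap.GeneralLinearGroup F V) : V →ₗ[F] V) v = v := by
          rw [hgx]; exact h
        simp only [Units.val_mul, Module.End.mul_apply] at this
        have := congrArg (fun w => ((g⁻¹ : LinearMap.GeneralLinearGroup F V) : V →ₗ[F] V) w) this
        simpa [← Module.End.mul_apply, ← Units.val_mul] using this
      · intro h
        rw [← hgx]
        simp only [Units.val_mul, Module.End.mul_apply]
        rw [h]
        simp [← Module.End.mul_apply, ← Units.val_mul]
    rw [heq, LinearEquiv.finrank_map_eq]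
  -- the common fixed space is trivial
  have hWbot : S.inf f = ⊥ := by
    have hfix : ∀ g ∈ Subgroup.closure (S : Set (LinearMap.GeneralLinearGroup F V)),
        ∀ v ∈ S.inf f, (g : V →ₗ[F] V) v = v := by
      intro g hg
      induction hg using Subgroup.closure_induction with
      | mem s hs => intro v hv
                    exact (hmem s v).1 ((Finset.inf_le hs : S.inf f ≤ f s) hv)
      | one => intro v _; simp
      | mul a b _ _ ha hb =>
          intro v hv
          simp only [Units.val_mul, Module.End.mul_apply, hb v hv, ha v hv]
      | inv a _ ha =>
          intro v hv
          have := congrArg (fun w => ((a⁻¹ : LinearMap.GeneralLinearGroup F V) : V →ₗ[F] V) w)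
            (ha v hv)
          have h2 : ((a⁻¹ : LinearMap.GeneralLinearGroup F V) : V →ₗ[F] V) v = v := by
            simpa [← Module.End.mul_apply, ← Units.val_mul] using this.symm
          exact h2
    rcases hirr (S.inf f) (fun g hg v hv => by rw [hfix g (hgen hg) v hv]; exact hv) with h | h
    · exact h
    · exfalso
      apply hG
      rw [Subgroup.eq_bot_iff_forall]
      intro g hg
      have : ∀ v : V, (g : V →ₗ[F] V) v = v := fun v =>
        hfix g (hgen hg) v (h ▸ Submodule.mem_top)
      ext v
      exact this v
  -- dimension count
  have key : ∀ (T : Finset (LinearMap.GeneralLinearGroup F V)), T.Nonempty →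
      (∀ s ∈ T, Module.finrank F (f s) = k) →
      n ≤ Module.finrank F (T.inf f : Submodule F V) + T.card * (n - k) := by
    intro T hT
    induction hT using Finset.Nonempty.cons_induction with
    | singleton a =>
        intro h
        rw [Finset.inf_singleton, Finset.card_singleton, h a (Finset.mem_singleton_self a), one_mul]
        omega
    | cons a t ha ht IH =>
        intro h
        have IH' := IH (fun s hs => h s (Finset.mem_cons_of_mem hs))
        rw [Finset.inf_cons, Finset.card_cons]
        have hsup := Submodule.finrank_sup_add_finrank_inf_eq (f a) (t.inf f)
        have hsle : Module.finrank F ((f a ⊔ t.inf f : Submodule F V)) ≤ n :=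
          Submodule.finrank_le _
        have hfa : Module.finrank F (f a) = k := h a (Finset.mem_cons_self a t)
        have hmul : (t.card + 1) * (n - k) = t.card * (n - k) + (n - k) := by ring
        rw [hmul]
        omega
  have hmain := key S hS hrank
  rw [hWbot] at hmain
  simp only [finrank_bot, zero_add] at hmain
  -- pass to reals
  have hm : 0 < S.card := Finset.card_pos.2 hS
  have hmR : (0:ℝ) < (S.card : ℝ) := by exact_mod_cast hm
  have hmainR : (n : ℝ) ≤ (S.card : ℝ) * ((n : ℝ) - (k : ℝ)) := by
    have := hmain
    have hcast : ((n - k : ℕ) : ℝ) = (n : ℝ) - (k : ℝ) := by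
      rw [Nat.cast_sub hkn]
    calc (n : ℝ) ≤ ((S.card * (n - k) : ℕ) : ℝ) := by exact_mod_cast this
      _ = (S.card : ℝ) * ((n : ℝ) - (k : ℝ)) := by push_cast [Nat.cast_sub hkn]; ring
  show (k : ℝ) ≤ (1 - 1 / (S.card : ℝ)) * (n : ℝ)
  have hdiv : (n : ℝ) / (S.card : ℝ) ≤ (n : ℝ) - (k : ℝ) := by
    rw [div_le_iff₀ hmR]
    linarith [mul_comm ((n:ℝ) - k) (S.card : ℝ)]
  have : (1 - 1 / (S.card : ℝ)) * (n : ℝ) = (n : ℝ) - (n : ℝ) / (S.card : ℝ) := by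
    field_simp
  rw [this]
  linarith
end

section
/- For all natural numbers ℓ and k with ℓ ≥ 9, k ≥ 2 and 2k ≤ ℓ, the multinomial coefficient (ℓ+1)! / (k! · k! · (ℓ−2k+1)!) is at least ℓ(ℓ²−1)(ℓ−2)/4; equivalently, ℓ(ℓ²−1)(ℓ−2) · k! · k! · (ℓ−2k+1)! ≤ 4 · (ℓ+1)!, with equality when k = 2. -/
private lemma lemC : ∀ n c : ℕ, Nat.factorial (n+1) * Nat.factorial (c+1) ≤ Nat.factorial (n+1+c) := by
  intro n
  induction n with
  | zero =>
      intro c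
      rw [show (0:ℕ)+1+c = c+1 by omega]
      simp [Nat.factorial]
  | succ m ih =>
      intro c
      have key : Nat.factorial (m+1+1) * Nat.factorial (c+1) ≤ Nat.factorial (m+1+1+c) := by
        calc Nat.factorial (m+1+1) * Nat.factorial (c+1)
            = (m+1+1) * (Nat.factorial (m+1) * Nat.factorial (c+1)) := by
              rw [Nat.factorial_succ (m+1)]; ring
          _ ≤ (m+1+1) * Nat.factorial (m+1+c) := Nat.mul_le_mul_left _ (ih c)
          _ ≤ (m+1+c+1) * Nat.factorial (m+1+c) := Nat.mul_le_mul_right _ (by omega)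
          _ = Nat.factorial (m+1+c+1) := (Nat.factorial_succ (m+1+c)).symm
          _ = Nat.factorial (m+1+1+c) := by rw [show m+1+c+1 = m+1+1+c by omega]
      exact key

private lemma lemB : ∀ b : ℕ, Nat.factorial (b+5) * Nat.factorial (b+5) ≤ 4 * Nat.factorial (2*b+7) := by
  intro b
  induction b with
  | zero => decide
  | succ m ih =>
      have h3 : (m+6)*(m+6) ≤ (2*m+9)*(2*m+8) := by nlinarith
      calc Nat.factorial (m+1+5) * Nat.factorial (m+1+5)
          = (m+6)*(m+6) * (Nat.factorial (m+5) * Nat.factorial (m+5)) := by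
            rw [show m+1+5 = (m+5)+1 by omega, Nat.factorial_succ (m+5)]; ring
        _ ≤ (m+6)*(m+6) * (4 * Nat.factorial (2*m+7)) := Nat.mul_le_mul_left _ ih
        _ ≤ (2*m+9)*(2*m+8) * (4 * Nat.factorial (2*m+7)) := Nat.mul_le_mul_right _ h3
        _ = 4 * Nat.factorial (2*(m+1)+7) := by
            rw [show 2*(m+1)+7 = (2*m+8)+1 by omega, Nat.factorial_succ (2*m+8),
              show 2*m+8 = (2*m+7)+1 by omega, Nat.factorial_succ (2*m+7)]
            ring

private lemma lemA : ∀ b c : ℕ, 5 ≤ 2*b + c →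
    Nat.factorial (b+2) * Nat.factorial (b+2) * Nat.factorial (c+1)
      ≤ 4 * Nat.factorial (2*b+c+1) := by
  intro b c h
  match b, h with
  | 0, h =>
      rw [show 2*0+c+1 = c+1 by omega]
      norm_num [Nat.factorial]
  | 1, h =>
      have hc : 3 ≤ c := by omega
      have hprod : 36 ≤ 4 * ((c+3) * (c+2)) := by nlinarith
      calc Nat.factorial (1+2) * Nat.factorial (1+2) * Nat.factorial (c+1)
          = 36 * Nat.factorial (c+1) := by norm_num [Nat.factorial]
        _ ≤ (4 * ((c+3) * (c+2))) * Nat.factorial (c+1) := Nat.mul_le_mul_right _ hprod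
        _ = 4 * ((c+3) * ((c+2) * Nat.factorial (c+1))) := by ring
        _ = 4 * ((c+3) * Nat.factorial (c+2)) := by rw [Nat.factorial_succ (c+1)]
        _ = 4 * Nat.factorial (c+3) := by rw [Nat.factorial_succ (c+2)]
        _ = 4 * Nat.factorial (2*1+c+1) := by rw [show 2*1+c+1 = c+3 by omega]
  | 2, h =>
      have hc : 1 ≤ c := by omega
      obtain ⟨d, rfl⟩ : ∃ d, c = d + 1 := ⟨c - 1, by omega⟩
      have hd : (6:ℕ)*(5*(4*3)) ≤ (d+6) * ((d+5) * ((d+4) * (d+3))) :=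
        Nat.mul_le_mul (by omega) (Nat.mul_le_mul (by omega)
          (Nat.mul_le_mul (by omega) (by omega)))
      have hprod : 576 ≤ 4 * ((d+6) * ((d+5) * ((d+4) * (d+3)))) := by
        calc (576:ℕ) ≤ 4 * (6*(5*(4*3))) := by norm_num
          _ ≤ 4 * ((d+6) * ((d+5) * ((d+4) * (d+3)))) := Nat.mul_le_mul_left 4 hd
      calc Nat.factorial (2+2) * Nat.factorial (2+2) * Nat.factorial (d+1+1)
          = 576 * Nat.factorial (d+2) := by norm_num [Nat.factorial]
        _ ≤ (4 * ((d+6) * ((d+5) * ((d+4) * (d+3))))) * Nat.factorial (d+2) :=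
            Nat.mul_le_mul_right _ hprod
        _ = 4 * ((d+6) * ((d+5) * ((d+4) * ((d+3) * Nat.factorial (d+2))))) := by ring
        _ = 4 * ((d+6) * ((d+5) * ((d+4) * Nat.factorial (d+3)))) := by
            rw [Nat.factorial_succ (d+2)]
        _ = 4 * ((d+6) * ((d+5) * Nat.factorial (d+4))) := by rw [Nat.factorial_succ (d+3)]
        _ = 4 * ((d+6) * Nat.factorial (d+5)) := by rw [Nat.factorial_succ (d+4)]
        _ = 4 * Nat.factorial (d+6) := by rw [Nat.factorial_succ (d+5)]
        _ = 4 * Nat.factorial (2*2+(d+1)+1) := by rw [show 2*2+(d+1)+1 = d+6 by omega]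
  | (m+3), h =>
      have hB := lemB m
      calc Nat.factorial (m+3+2) * Nat.factorial (m+3+2) * Nat.factorial (c+1)
          = Nat.factorial (m+5) * Nat.factorial (m+5) * Nat.factorial (c+1) := by
            rw [show m+3+2 = m+5 by omega]
        _ ≤ 4 * Nat.factorial (2*m+7) * Nat.factorial (c+1) := Nat.mul_le_mul_right _ hB
        _ = 4 * (Nat.factorial ((2*m+6)+1) * Nat.factorial (c+1)) := by
            rw [show (2*m+6)+1 = 2*m+7 by omega]; ring
        _ ≤ 4 * Nat.factorial ((2*m+6)+1+c) := Nat.mul_le_mul_left _ (lemC (2*m+6) c)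
        _ = 4 * Nat.factorial (2*(m+3)+c+1) := by rw [show (2*m+6)+1+c = 2*(m+3)+c+1 by omega]

/-- For `ℓ ≥ 9`, `k ≥ 2` with `2k ≤ ℓ`, the multinomial coefficient
`(ℓ+1)! / (k!·k!·(ℓ−2k+1)!)` is at least `ℓ(ℓ²−1)(ℓ−2)/4`; equivalently
`ℓ(ℓ²−1)(ℓ−2) · k!·k!·(ℓ−2k+1)! ≤ 4·(ℓ+1)!`, with equality when `k = 2`. -/
theorem stmt4 (ℓ k : ℕ) (hℓ : 9 ≤ ℓ) (hk : 2 ≤ k) (hkℓ : 2 * k ≤ ℓ) :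
    ℓ * (ℓ ^ 2 - 1) * (ℓ - 2) *
        (Nat.factorial k * Nat.factorial k * Nat.factorial (ℓ - 2 * k + 1)) ≤
      4 * Nat.factorial (ℓ + 1) ∧
    (k = 2 → ℓ * (ℓ ^ 2 - 1) * (ℓ - 2) *
        (Nat.factorial k * Nat.factorial k * Nat.factorial (ℓ - 2 * k + 1)) =
      4 * Nat.factorial (ℓ + 1)) := by
  obtain ⟨b, rfl⟩ : ∃ b, k = b + 2 := ⟨k - 2, by omega⟩
  obtain ⟨c, rfl⟩ : ∃ c, ℓ = 2*(b+2) + c := ⟨ℓ - 2*(b+2), by omega⟩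
  have hbc : 5 ≤ 2*b + c := by omega
  have e1 : 2*(b+2)+c - 2*(b+2) + 1 = c + 1 := by omega
  have e2 : (2*(b+2)+c)^2 = (2*b+c+5)*(2*b+c+3) + 1 := by ring
  have e3 : (2*(b+2)+c)^2 - 1 = (2*b+c+5)*(2*b+c+3) := by rw [e2]; omega
  have e4 : 2*(b+2)+c - 2 = 2*b+c+2 := by omega
  have e5 : 2*(b+2)+c = 2*b+c+4 := by omega
  have efac : Nat.factorial (2*(b+2)+c+1)
      = (2*b+c+5) * ((2*b+c+4) * ((2*b+c+3) * ((2*b+c+2) * Nat.factorial (2*b+c+1)))) := by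
    rw [show 2*(b+2)+c+1 = (2*b+c+4)+1 by omega, Nat.factorial_succ (2*b+c+4),
      show 2*b+c+4 = (2*b+c+3)+1 by omega, Nat.factorial_succ (2*b+c+3),
      show 2*b+c+3 = (2*b+c+2)+1 by omega, Nat.factorial_succ (2*b+c+2),
      show 2*b+c+2 = (2*b+c+1)+1 by omega, Nat.factorial_succ (2*b+c+1)]
  rw [efac, e1, e3, e4, e5]
  constructor
  · have key := lemA b c hbc
    calc (2*b+c+4) * ((2*b+c+5)*(2*b+c+3)) * (2*b+c+2) *
          (Nat.factorial (b+2) * Nat.factorial (b+2) * Nat.factorial (c+1))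
        ≤ (2*b+c+4) * ((2*b+c+5)*(2*b+c+3)) * (2*b+c+2) * (4 * Nat.factorial (2*b+c+1)) :=
          Nat.mul_le_mul_left _ key
      _ = 4 * ((2*b+c+5) * ((2*b+c+4) * ((2*b+c+3) * ((2*b+c+2) * Nat.factorial (2*b+c+1))))) := by
          ring
  · intro hb
    have hb0 : b = 0 := by omega
    subst hb0
    have h2 : Nat.factorial (0+2) = 2 := by decide
    rw [h2, show 2*0+c+1 = c+1 by omega]
    ring
end

section
/- Let F be a field of characteristic 2, let V and W be finite-dimensional F-vector spaces of dimensions m and n respectively, and let a ∈ GL(V) and b ∈ GL(W) satisfy a² = 1 and b² = 1. Set r = rank(a − 1_V) and s = rank(b − 1_W). Then the fixed-point subspace of the tensor product map a ⊗ b on V ⊗ W has dimension m·n − r·n − s·m + 2·r·s. -/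
/-!
Write `A = a - 1` and `B = b - 1`. Since `b² = 1`, a vector `x` is fixed by `a ⊗ b` iff
`(a ⊗ 1) x = (1 ⊗ b) x`, i.e. iff `x ∈ ker (A ⊗ 1 - 1 ⊗ B)`; in characteristic 2 the involutions
satisfy `A² = B² = 0`, and this is all that is needed from the characteristic.

For square-zero `A` and `B`, map `ker (A ⊗ 1 - 1 ⊗ B)` to `range A ⊗ W` by `A ⊗ 1`. Choosing a left
inverse of `range A ↪ V` and a section of `V ↠ range A` shows that the image is exactly the range of
`1 ⊗ B`, of dimension `r s`, while exactness of `ker A ↪ V ↠ range A` after tensoring with `W`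
identifies the kernel with `ker A ⊗ ker B`, of dimension `(m - r)(n - s)`.
-/

open TensorProduct LinearMap Module

theorem sub_one_mul_self_eq_zero_of_mul_self_eq_one {R : Type*} [Ring R] (h2 : (2 : R) = 0)
    {x : R} (hx : x * x = 1) : (x - 1) * (x - 1) = 0 := by
  have hexpand : (x - 1) * (x - 1) = x * x + 1 - 2 * x := by noncomm_ring
  rw [hexpand, hx, one_add_one_eq_two, h2, zero_mul, sub_zero]

theorem LinearEquiv.toLinearMap_mul_self_of_sq_eq_one {R M : Type*} [Semiring R]
    [AddCommMonoid M] [Module R M] {e : M ≃ₗ[R] M} (he : e ^ 2 = 1) :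
    (e : Module.End R M) * e = 1 := by
  rw [← coe_toLinearMap_mul, ← sq, he]
  rfl

section CommRing

variable {R M N P Q : Type*} [CommRing R] [AddCommGroup M] [Module R M] [AddCommGroup N]
  [Module R N] [AddCommGroup P] [Module R P] [AddCommGroup Q] [Module R Q]

theorem LinearMap.sub_id_comp_self_eq_zero (h2 : (2 : R) = 0) {f : Module.End R M}
    (hf : f * f = 1) : (f - id) ∘ₗ (f - id) = 0 :=
  sub_one_mul_self_eq_zero_of_mul_self_eq_one
    (by rw [← map_ofNat (algebraMap R (Module.End R M)) 2, h2, map_zero]) hf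

theorem LinearMap.lTensor_rTensor_comm_apply (f : M →ₗ[R] P) (g : N →ₗ[R] Q) (x : M ⊗[R] N) :
    lTensor P g (rTensor N f x) = rTensor Q f (lTensor M g x) := by
  rw [← comp_apply, lTensor_comp_rTensor, ← rTensor_comp_lTensor, comp_apply]

theorem LinearMap.ker_map_sub_id_eq_ker_rTensor_sub_lTensor (a : M →ₗ[R] M) {b : N →ₗ[R] N}
    (hb : b ∘ₗ b = id) :
    ker (map a b - id) = ker (rTensor N (a - id) - lTensor M (b - id)) := by
  have hfactor : map a b - id = lTensor M b ∘ₗ (rTensor N (a - id) - lTensor M (b - id)) := by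
    rw [rTensor_sub, lTensor_sub, rTensor_id, lTensor_id, comp_sub, comp_sub, comp_sub,
      lTensor_comp_rTensor, ← lTensor_comp, hb, lTensor_id, comp_id]
    abel
  have hinj : Function.Injective (lTensor M b) :=
    Function.LeftInverse.injective (g := lTensor M b) fun x => by
      rw [← lTensor_comp_apply, hb, lTensor_id_apply]
  rw [hfactor, ker_comp_of_ker_eq_bot _ (ker_eq_bot.mpr hinj)]

end CommRing

section FiniteDimensional

variable {K M N N' : Type*} [Field K] [AddCommGroup M] [Module K M] [AddCommGroup N]
  [Module K N] [AddCommGroup N'] [Module K N']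

theorem Submodule.finrank_map_add_finrank_inf_ker [FiniteDimensional K M] (p : Submodule K M)
    (f : M →ₗ[K] N) : finrank K (p.map f) + finrank K ↥(p ⊓ ker f) = finrank K p := by
  rw [← range_domRestrict, ← map_comap_subtype, finrank_map_subtype_eq, ← ker_domRestrict]
  exact finrank_range_add_finrank_ker _

variable (M)

theorem LinearMap.finrank_range_lTensor (f : N →ₗ[K] N') :
    finrank K (range (lTensor M f)) = finrank K M * finrank K (range f) := by
  rw [show lTensor M f = _ from lTensor_comp M (range f).subtype f.rangeRestrict,
    range_comp_of_range_eq_top _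
      (range_eq_top.mpr (lTensor_surjective M f.surjective_rangeRestrict)),
    finrank_range_of_inj (Flat.lTensor_preserves_injective_linearMap _
      (range f).injective_subtype),
    finrank_tensorProduct]

theorem LinearMap.finrank_ker_lTensor (f : N →ₗ[K] N') :
    finrank K (ker (lTensor M f)) = finrank K M * finrank K (ker f) := by
  rw [(Flat.lTensor_exact M (exact_subtype_ker_map f)).linearMap_ker_eq,
    finrank_range_of_inj (Flat.lTensor_preserves_injective_linearMap _
      (ker f).injective_subtype),
    finrank_tensorProduct]

end FiniteDimensional

section SquareZero

variable {K V W : Type*} [Field K] [AddCommGroup V] [Module K V] [AddCommGroup W] [Module K W]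
  {A : V →ₗ[K] V} (B : W →ₗ[K] W)

theorem LinearMap.map_rTensor_rangeRestrict_ker_rTensor_sub_lTensor (hA : A ∘ₗ A = 0)
    (hB : B ∘ₗ B = 0) :
    (ker (rTensor W A - lTensor V B)).map (rTensor W A.rangeRestrict) =
      range (lTensor (range A) B) := by
  obtain ⟨L, hL⟩ := (range A).subtype.exists_leftInverse_of_injective (Submodule.ker_subtype _)
  obtain ⟨σ, hσ⟩ := A.rangeRestrict.exists_rightInverse_of_surjective A.range_rangeRestrict
  have hLA : L ∘ₗ A = A.rangeRestrict := by
    change L ∘ₗ ((range A).subtype ∘ₗ A.rangeRestrict) = _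
    rw [← comp_assoc, hL, id_comp]
  have hAσ : A ∘ₗ σ = (range A).subtype := by
    change ((range A).subtype ∘ₗ A.rangeRestrict) ∘ₗ σ = _
    rw [comp_assoc, hσ, comp_id]
  have hAι : A ∘ₗ (range A).subtype = 0 := by
    ext ⟨_, v, rfl⟩
    exact congr($hA v)
  have hqι : A.rangeRestrict ∘ₗ (range A).subtype = 0 := by
    ext ⟨_, v, rfl⟩
    exact congr($hA v)
  apply le_antisymm
  · rintro _ ⟨x, hx, rfl⟩
    rw [SetLike.mem_coe, mem_ker, sub_apply, sub_eq_zero] at hx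
    refine ⟨rTensor W L x, ?_⟩
    rw [lTensor_rTensor_comm_apply, ← hx, ← rTensor_comp_apply, hLA]
  · rintro _ ⟨c, rfl⟩
    refine ⟨rTensor W σ (lTensor _ B c) + rTensor W (range A).subtype c, ?_, ?_⟩
    · rw [SetLike.mem_coe, mem_ker, sub_apply, sub_eq_zero, map_add, map_add,
        ← rTensor_comp_apply, ← rTensor_comp_apply, hAσ, hAι, rTensor_zero, zero_apply, add_zero,
        lTensor_rTensor_comm_apply, lTensor_rTensor_comm_apply, ← lTensor_comp_apply, hB,
        lTensor_zero, zero_apply, map_zero, zero_add]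
    · rw [map_add, ← rTensor_comp_apply, ← rTensor_comp_apply, hσ, hqι, rTensor_id_apply,
        rTensor_zero, zero_apply, add_zero]

theorem LinearMap.ker_rTensor_sub_lTensor_inf_ker_rTensor_rangeRestrict :
    ker (rTensor W A - lTensor V B) ⊓ ker (rTensor W A.rangeRestrict) =
      (ker (lTensor (ker A) B)).map (rTensor W (ker A).subtype) := by
  have hexact : Function.Exact (rTensor W (ker A).subtype) (rTensor W A.rangeRestrict) :=
    Flat.rTensor_exact W (by rw [exact_iff, ker_rangeRestrict, Submodule.range_subtype])
  have hinj : Function.Injective (rTensor W (ker A).subtype) :=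
    Flat.rTensor_preserves_injective_linearMap _ (ker A).injective_subtype
  have hqι : A.rangeRestrict ∘ₗ (ker A).subtype = 0 := by
    ext ⟨v, hv⟩
    exact hv
  apply le_antisymm
  · rintro x ⟨hT, hq⟩
    obtain ⟨y, rfl⟩ := (hexact x).mp hq
    rw [SetLike.mem_coe, mem_ker, sub_apply, ← rTensor_comp_apply, comp_ker_subtype, rTensor_zero,
      zero_apply, zero_sub, neg_eq_zero, lTensor_rTensor_comm_apply,
      ← map_zero (rTensor W (ker A).subtype)] at hT
    exact ⟨y, hinj hT, rfl⟩
  · rintro _ ⟨y, hy, rfl⟩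
    constructor
    · rw [SetLike.mem_coe, mem_ker, sub_apply, ← rTensor_comp_apply, comp_ker_subtype, rTensor_zero,
        zero_apply, lTensor_rTensor_comm_apply, hy, map_zero, sub_zero]
    · rw [SetLike.mem_coe, mem_ker, ← rTensor_comp_apply, hqι, rTensor_zero, zero_apply]

theorem LinearMap.finrank_ker_rTensor_sub_lTensor_of_comp_self_eq_zero [FiniteDimensional K V]
    [FiniteDimensional K W] (hA : A ∘ₗ A = 0) (hB : B ∘ₗ B = 0) :
    finrank K (ker (rTensor W A - lTensor V B)) =
      finrank K (range A) * finrank K (range B) + finrank K (ker A) * finrank K (ker B) := by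
  rw [← (ker (rTensor W A - lTensor V B)).finrank_map_add_finrank_inf_ker
      (rTensor W A.rangeRestrict),
    map_rTensor_rangeRestrict_ker_rTensor_sub_lTensor B hA hB,
    ker_rTensor_sub_lTensor_inf_ker_rTensor_rangeRestrict, finrank_range_lTensor,
    ← (Submodule.equivMapOfInjective _ (Flat.rTensor_preserves_injective_linearMap _
      (ker A).injective_subtype) _).finrank_eq, finrank_ker_lTensor]

end SquareZero

/-- Let `F` be a field of characteristic 2, `V`, `W` finite-dimensional `F`-spaces of
dimensions `m`, `n`, and let `a ∈ GL(V)`, `b ∈ GL(W)` be involutions (`a² = 1`, `b² = 1`)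
with `r = rank(a − 1)`, `s = rank(b − 1)`. Then the fixed-point space of `a ⊗ b` on `V ⊗ W`
has dimension `m·n − r·n − s·m + 2·r·s`. -/
theorem stmt5 {F V W : Type*} [Field F] (hF : ringChar F = 2)
    [AddCommGroup V] [Module F V] [FiniteDimensional F V]
    [AddCommGroup W] [Module F W] [FiniteDimensional F W]
    {m n : ℕ} (hm : Module.finrank F V = m) (hn : Module.finrank F W = n)
    (a : V ≃ₗ[F] V) (b : W ≃ₗ[F] W) (ha : a ^ 2 = 1) (hb : b ^ 2 = 1)
    {r s : ℕ}
    (hr : Module.finrank F (LinearMap.range (a.toLinearMap - LinearMap.id)) = r)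
    (hs : Module.finrank F (LinearMap.range (b.toLinearMap - LinearMap.id)) = s) :
    (Module.finrank F (LinearMap.ker
        (TensorProduct.map a.toLinearMap b.toLinearMap - LinearMap.id)) : ℤ) =
      m * n - r * n - s * m + 2 * r * s := by
  have h2 : (2 : F) = 0 := by simpa [hF] using ringChar.Nat.cast_ringChar (R := F)
  have haa := a.toLinearMap_mul_self_of_sq_eq_one ha
  have hbb := b.toLinearMap_mul_self_of_sq_eq_one hb
  rw [ker_map_sub_id_eq_ker_rTensor_sub_lTensor _ hbb,
    finrank_ker_rTensor_sub_lTensor_of_comp_self_eq_zero _ (sub_id_comp_self_eq_zero h2 haa)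
      (sub_id_comp_self_eq_zero h2 hbb), hr, hs, ← hm, ← hn,
    ← finrank_range_add_finrank_ker (a.toLinearMap - LinearMap.id : V →ₗ[F] V),
    ← finrank_range_add_finrank_ker (b.toLinearMap - LinearMap.id : W →ₗ[F] W), hr, hs]
  push_cast
  ring
end

section
/- For every natural number ℓ ≥ 9 and every real number d with d ≥ 3ℓ³, one has 2^d > 2^{ℓ(2ℓ+1) + (1 − 1/(ℓ+3))·d} + (2^{2ℓ} − 1) · 2^{(1 − 1/(2ℓ+1))·d}, where the powers of 2 with non-integer exponents are real powers. -/
open Real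

/-- For every `ℓ ≥ 9` and every real `d ≥ 3ℓ³`, one has
`2^d > 2^{ℓ(2ℓ+1) + (1 − 1/(ℓ+3))·d} + (2^{2ℓ} − 1)·2^{(1 − 1/(2ℓ+1))·d}` (real powers). -/
theorem stmt9 (ℓ : ℕ) (hℓ : 9 ≤ ℓ) (d : ℝ) (hd : 3 * (ℓ : ℝ) ^ 3 ≤ d) :
    (2 : ℝ) ^ d >
      (2 : ℝ) ^ ((ℓ : ℝ) * (2 * (ℓ : ℝ) + 1) + (1 - 1 / ((ℓ : ℝ) + 3)) * d) +
        ((2 : ℝ) ^ (2 * ℓ) - 1) * (2 : ℝ) ^ ((1 - 1 / (2 * (ℓ : ℝ) + 1)) * d) := by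
  have hL : (9 : ℝ) ≤ (ℓ : ℝ) := by exact_mod_cast hℓ
  set L : ℝ := (ℓ : ℝ) with hLdef
  have h3 : (0 : ℝ) < L + 3 := by linarith
  have h21 : (0 : ℝ) < 2 * L + 1 := by linarith
  have hinv3 : (1 / (L + 3)) * (L + 3) = 1 := by field_simp
  have hinv21 : (1 / (2 * L + 1)) * (2 * L + 1) = 1 := by field_simp
  -- first exponent bound
  have hE1 : L * (2 * L + 1) + (1 - 1 / (L + 3)) * d < d - 1 := by
    have key : (L * (2 * L + 1) + 1) * (L + 3) < d := by nlinarith [sq_nonneg L, sq_nonneg (L - 9)]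
    have hdiv : L * (2 * L + 1) + 1 < d / (L + 3) := by
      rw [lt_div_iff₀ h3]; linarith
    have : (1 / (L + 3)) * d = d / (L + 3) := by ring
    nlinarith [hdiv]
  have hE2 : 2 * L + (1 - 1 / (2 * L + 1)) * d < d - 1 := by
    have key : (2 * L + 1) * (2 * L + 1) < d := by nlinarith [sq_nonneg L, sq_nonneg (L - 9)]
    have hdiv : 2 * L + 1 < d / (2 * L + 1) := by
      rw [lt_div_iff₀ h21]; nlinarith
    have : (1 / (2 * L + 1)) * d = d / (2 * L + 1) := by ring
    nlinarith [hdiv]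
  have one_lt_two : (1 : ℝ) < 2 := one_lt_two
  have t1 : (2 : ℝ) ^ (L * (2 * L + 1) + (1 - 1 / (L + 3)) * d) < (2 : ℝ) ^ (d - 1) :=
    rpow_lt_rpow_left_iff one_lt_two |>.mpr hE1
  have t2 : ((2 : ℝ) ^ (2 * ℓ) - 1) * (2 : ℝ) ^ ((1 - 1 / (2 * L + 1)) * d) < (2 : ℝ) ^ (d - 1) := by
    have hpos : (0 : ℝ) < (2 : ℝ) ^ ((1 - 1 / (2 * L + 1)) * d) := rpow_pos_of_pos two_pos _
    have hlt : ((2 : ℝ) ^ (2 * ℓ) - 1) * (2 : ℝ) ^ ((1 - 1 / (2 * L + 1)) * d)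
        < (2 : ℝ) ^ (2 * ℓ) * (2 : ℝ) ^ ((1 - 1 / (2 * L + 1)) * d) := by
      apply mul_lt_mul_of_pos_right _ hpos
      linarith [pow_pos (two_pos (α := ℝ)) (2 * ℓ)]
    have hcast : ((2 : ℝ) ^ (2 * ℓ)) = (2 : ℝ) ^ ((2 * ℓ : ℕ) : ℝ) := (rpow_natCast 2 (2 * ℓ)).symm
    have hmul : (2 : ℝ) ^ (2 * ℓ) * (2 : ℝ) ^ ((1 - 1 / (2 * L + 1)) * d)
        = (2 : ℝ) ^ (((2 * ℓ : ℕ) : ℝ) + (1 - 1 / (2 * L + 1)) * d) := by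
      rw [hcast, ← rpow_add two_pos]
    have hexp : (((2 * ℓ : ℕ) : ℝ) + (1 - 1 / (2 * L + 1)) * d) < d - 1 := by
      push_cast
      convert hE2 using 2 <;> ring
    calc ((2 : ℝ) ^ (2 * ℓ) - 1) * (2 : ℝ) ^ ((1 - 1 / (2 * L + 1)) * d)
        < (2 : ℝ) ^ (((2 * ℓ : ℕ) : ℝ) + (1 - 1 / (2 * L + 1)) * d) := hmul ▸ hlt
      _ < (2 : ℝ) ^ (d - 1) := rpow_lt_rpow_left_iff one_lt_two |>.mpr hexp
  have hsum : (2 : ℝ) ^ (d - 1) + (2 : ℝ) ^ (d - 1) = (2 : ℝ) ^ d := by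
    rw [← two_mul, mul_comm, ← rpow_add_one two_ne_zero]
    norm_num
  linarith
end
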